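/- Let A ∈ ℝ^{n×N}, let W_1,…,W_N be subspaces of ℝ^M, and let c = (c_1,…,c_N) be a block coefficient vector with support S = {j : c_j ≠ 0}. Suppose the submatrix A_S is injective and ‖sgn(U(c)_S)^T A_S^† A_{·,j}‖_2 < 1 for all j ∉ S, where A_S^† is the Moore–Penrose pseudoinverse of A_S. Then c is the unique solution of problem (P1) with data Y = A·U(c). -/

import Mathlib

open scoped BigOperators
open Matrix

/-- Euclidean norm of a finite-dimensional real vector. -/
noncomputable def norm2 {ι : Type*} [Fintype ι] (v : ι → ℝ) : ℝ :=
  Real.sqrt (∑ i, v i ^ 2)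

/-- Mixed ℓ₂,₁ norm of a block coefficient vector. -/
noncomputable def l21 {N : ℕ} {m : Fin N → ℕ} (c : ∀ j, Fin (m j) → ℝ) : ℝ :=
  ∑ j, norm2 (c j)

open Classical in
/-- Mixed ℓ₂,₀ "norm": number of nonzero blocks. -/
noncomputable def l20 {N : ℕ} {m : Fin N → ℕ} (c : ∀ j, Fin (m j) → ℝ) : ℕ :=
  (Finset.univ.filter fun j => c j ≠ 0).card

/-- The matrix U(c) whose j-th row is (U_j c_j)ᵀ. -/
noncomputable def Ucmat {N M : ℕ} {m : Fin N → ℕ}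
    (U : ∀ j, Matrix (Fin M) (Fin (m j)) ℝ)
    (c : ∀ j, Fin (m j) → ℝ) : Matrix (Fin N) (Fin M) ℝ :=
  Matrix.of fun j i => (U j).mulVec (c j) i

/-!
With `X = U(c)` and `Λ = (A_S^†)ᵀ sgn(X_S)`, the rows of `V = Aᵀ Λ` are `sgn(X_j)` for `j ∈ S`
(because `A_S^† A_S = 1`) and have norm `< 1` off `S`. For a competitor `X + D` with `A D = 0`
we get `∑ⱼ ⟪V_j, D_j⟫ = tr(Λᵀ A D) = 0`, while row by row
`‖X_j + D_j‖ ≥ ‖X_j‖ + ⟪V_j, D_j⟫`, strictly on a row `j ∉ S` with `D_j ≠ 0`. Such a row exists,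
since `A` is injective on matrices whose rows vanish off `S`.
-/

open scoped RealInnerProductSpace

section Norm2

variable {κ : Type*} [Fintype κ]

noncomputable def sgn (v : κ → ℝ) : κ → ℝ := fun i => v i / norm2 v

lemma norm2_eq_norm (v : κ → ℝ) : norm2 v = ‖WithLp.toLp 2 v‖ := by
  simp [norm2, EuclideanSpace.norm_eq, sq_abs]

lemma dotProduct_eq_inner (v w : κ → ℝ) : v ⬝ᵥ w = ⟪WithLp.toLp 2 v, WithLp.toLp 2 w⟫ := by
  simp [EuclideanSpace.inner_eq_star_dotProduct, dotProduct_comm]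

lemma norm2_nonneg (v : κ → ℝ) : 0 ≤ norm2 v :=
  Real.sqrt_nonneg _

lemma norm2_zero : norm2 (0 : κ → ℝ) = 0 := by
  simp [norm2]

lemma norm2_pos {v : κ → ℝ} (hv : v ≠ 0) : 0 < norm2 v := by
  rw [norm2_eq_norm]
  simpa using hv

lemma dotProduct_le_norm2_mul (v w : κ → ℝ) : v ⬝ᵥ w ≤ norm2 v * norm2 w := by
  rw [dotProduct_eq_inner, norm2_eq_norm, norm2_eq_norm]
  exact real_inner_le_norm _ _

lemma dotProduct_lt_norm2 {v w : κ → ℝ} (hv : norm2 v < 1) (hw : w ≠ 0) :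
    v ⬝ᵥ w < norm2 w :=
  (dotProduct_le_norm2_mul v w).trans_lt <| mul_lt_of_lt_one_left (norm2_pos hw) hv

lemma dotProduct_self_eq_norm2_sq (v : κ → ℝ) : v ⬝ᵥ v = norm2 v ^ 2 := by
  rw [norm2_eq_norm, dotProduct_eq_inner, real_inner_self_eq_norm_sq]

lemma norm2_add_sgn_dotProduct_le {v : κ → ℝ} (hv : v ≠ 0) (w : κ → ℝ) :
    norm2 v + sgn v ⬝ᵥ w ≤ norm2 (v + w) := by
  have hpos := norm2_pos hv
  have hsgn : sgn v ⬝ᵥ w = v ⬝ᵥ w / norm2 v := by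
    simp only [sgn, dotProduct, div_mul_eq_mul_div, Finset.sum_div]
  have hcs := dotProduct_le_norm2_mul v (v + w)
  rw [dotProduct_add, dotProduct_self_eq_norm2_sq] at hcs
  rw [hsgn, add_div' _ _ _ hpos.ne', div_le_iff₀ hpos]
  nlinarith

end Norm2

section Orthonormal

variable {μ κ : Type*} [Fintype μ] [Fintype κ] [DecidableEq κ] {U : Matrix μ κ ℝ}

lemma dotProduct_mulVec_self_of_transpose_mul_self (hU : Uᵀ * U = 1) (v : κ → ℝ) :
    U *ᵥ v ⬝ᵥ U *ᵥ v = v ⬝ᵥ v := by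
  rw [dotProduct_mulVec, ← mulVec_transpose, mulVec_mulVec, hU, one_mulVec, dotProduct_comm]

lemma norm2_mulVec_of_transpose_mul_self (hU : Uᵀ * U = 1) (v : κ → ℝ) :
    norm2 (U *ᵥ v) = norm2 v := by
  rw [← sq_eq_sq₀ (norm2_nonneg _) (norm2_nonneg _), ← dotProduct_self_eq_norm2_sq,
    ← dotProduct_self_eq_norm2_sq, dotProduct_mulVec_self_of_transpose_mul_self hU]

lemma mulVec_injective_of_transpose_mul_self (hU : Uᵀ * U = 1) : Function.Injective (U *ᵥ ·) :=
  fun v w h => by simpa [mulVec_mulVec, hU] using congrArg (Uᵀ *ᵥ ·) h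

end Orthonormal

section DualCertificate

variable {ν ι κ : Type*} [Fintype ν] [Fintype ι] [Fintype κ]

lemma sum_mul_transpose_mul_dotProduct_eq_zero {A : Matrix ν ι ℝ} {D : Matrix ι κ ℝ}
    (hAD : A * D = 0) (Λ : Matrix ν κ ℝ) : ∑ j, (Aᵀ * Λ) j ⬝ᵥ D j = 0 := by
  have htrace : ∑ j, (Aᵀ * Λ) j ⬝ᵥ D j = (D * (Aᵀ * Λ)ᵀ).trace := by
    simp only [trace, diag, mul_apply, transpose_apply, dotProduct, mul_comm]
  rw [htrace, transpose_mul, transpose_transpose, ← Matrix.mul_assoc, trace_mul_cycle, hAD,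
    Matrix.zero_mul, trace_zero]

theorem sum_norm2_lt_sum_norm2_add_of_dual_certificate (A : Matrix ν ι ℝ) (X D : Matrix ι κ ℝ)
    (Λ : Matrix ν κ ℝ) (hAD : A * D = 0) (hsupp : ∀ j, X j ≠ 0 → (Aᵀ * Λ) j = sgn (X j))
    (hoff : ∀ j, X j = 0 → norm2 ((Aᵀ * Λ) j) < 1) (hD : ∃ j, X j = 0 ∧ D j ≠ 0) :
    ∑ j, norm2 (X j) < ∑ j, norm2 (X j + D j) := by
  have hrow : ∀ j, norm2 (X j) + (Aᵀ * Λ) j ⬝ᵥ D j ≤ norm2 (X j + D j) := by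
    intro j
    by_cases hX : X j = 0
    · rw [hX, norm2_zero, zero_add, zero_add]
      exact (dotProduct_le_norm2_mul _ _).trans
        (mul_le_of_le_one_left (norm2_nonneg _) (hoff j hX).le)
    · rw [hsupp j hX]
      exact norm2_add_sgn_dotProduct_le hX _
  obtain ⟨j₀, hX₀, hD₀⟩ := hD
  have hstrict : norm2 (X j₀) + (Aᵀ * Λ) j₀ ⬝ᵥ D j₀ < norm2 (X j₀ + D j₀) := by
    rw [hX₀, norm2_zero, zero_add, zero_add]
    exact dotProduct_lt_norm2 (hoff j₀ hX₀) hD₀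
  calc ∑ j, norm2 (X j)
      = ∑ j, (norm2 (X j) + (Aᵀ * Λ) j ⬝ᵥ D j) := by
        rw [Finset.sum_add_distrib, sum_mul_transpose_mul_dotProduct_eq_zero hAD, add_zero]
    _ < ∑ j, norm2 (X j + D j) :=
        Finset.sum_lt_sum (fun j _ => hrow j) ⟨j₀, Finset.mem_univ _, hstrict⟩

end DualCertificate

lemma transpose_mul_transpose_mul_apply {ν ι σ κ : Type*} [Fintype ν] [Fintype σ]
    (A : Matrix ν ι ℝ) (G : Matrix σ ν ℝ) (Q : Matrix σ κ ℝ) (j : ι) :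
    (Aᵀ * (Gᵀ * Q)) j = fun i => ∑ l, Q l i * (G *ᵥ fun p => A p j) l := by
  ext i
  simp only [mul_apply, transpose_apply, mulVec, dotProduct, Finset.mul_sum]
  rw [Finset.sum_comm]
  exact Finset.sum_congr rfl fun l _ => Finset.sum_congr rfl fun p _ => by ring

section Support

variable {ν ι κ : Type*} {A : Matrix ν ι ℝ} {S : Finset ι}

abbrev colSubmatrix (A : Matrix ν ι ℝ) (S : Finset ι) : Matrix ν S ℝ :=
  A.submatrix id Subtype.val

lemma eq_zero_of_mul_eq_zero_of_supported [Fintype ι]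
    (hinj : ∀ u : ι → ℝ, (∀ j ∉ S, u j = 0) → A *ᵥ u = 0 → u = 0)
    {D : Matrix ι κ ℝ} (hD : ∀ j ∉ S, D j = 0) (hAD : A * D = 0) : D = 0 := by
  ext j i
  have hcol := hinj (fun j => D j i) (fun j hj => by simp [hD j hj])
    (funext fun p => congrFun (congrFun hAD p) i)
  exact congrFun hcol j

variable [Fintype ν] [DecidableEq ι]

lemma transpose_mul_transpose_mul_apply_val {G : Matrix S ν ℝ}
    (hGA : G * colSubmatrix A S = 1) (Q : Matrix S κ ℝ) (l : S) :
    (Aᵀ * (Gᵀ * Q)) l = Q l := by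
  rw [← Matrix.mul_assoc, ← transpose_mul]
  ext i
  have hrow : ∀ l', (G * A) l' l = (1 : Matrix S S ℝ) l' l := fun l' =>
    congrFun (congrFun hGA l') l
  rw [mul_apply]
  simp only [transpose_apply, hrow, one_apply, ite_mul, one_mul, zero_mul, Finset.sum_ite_eq',
    Finset.mem_univ, if_true]

lemma mul_colSubmatrix_eq_one [Fintype ι]
    (hinj : ∀ u : ι → ℝ, (∀ j ∉ S, u j = 0) → A *ᵥ u = 0 → u = 0) {G : Matrix S ν ℝ}
    (hG : colSubmatrix A S * G * colSubmatrix A S = colSubmatrix A S) :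
    G * colSubmatrix A S = 1 := by
  set K : Matrix S S ℝ := G * colSubmatrix A S - 1
  -- `E` extends vectors on `S` by zero, so `A * E = A_S` and the rows of `E * K` vanish off `S`.
  set E : Matrix ι S ℝ := (1 : Matrix ι ι ℝ).submatrix id Subtype.val
  have hAE : A * E = colSubmatrix A S := mul_submatrix_one (Equiv.refl ι) _ A
  have hEK : E * K = 0 := by
    refine eq_zero_of_mul_eq_zero_of_supported hinj (fun j hj => ?_) ?_
    · ext i
      simp only [E, mul_apply, submatrix_apply, id, one_apply]
      exact Finset.sum_eq_zero fun l _ => by rw [if_neg (by rintro rfl; exact hj l.2), zero_mul]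
    · rw [← Matrix.mul_assoc, hAE, Matrix.mul_sub, ← Matrix.mul_assoc, hG, Matrix.mul_one,
        sub_self]
  rw [← sub_eq_zero]
  ext l i
  have hKli := congrFun (congrFun hEK l.1) i
  simp only [E, mul_apply, submatrix_apply, id, one_apply, Subtype.val_inj, ite_mul, one_mul,
    zero_mul, Finset.sum_ite_eq, Finset.mem_univ, if_true] at hKli
  exact hKli

end Support

lemma l21_eq_sum_norm2_Ucmat {N M : ℕ} {m : Fin N → ℕ} {U : ∀ j, Matrix (Fin M) (Fin (m j)) ℝ}
    (hU : ∀ j, (U j)ᵀ * U j = 1) (c : ∀ j, Fin (m j) → ℝ) :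
    l21 c = ∑ j, norm2 (Ucmat U c j) :=
  Finset.sum_congr rfl fun j _ => (norm2_mulVec_of_transpose_mul_self (hU j) (c j)).symm

theorem stmt9_general {n N M : ℕ} {m : Fin N → ℕ}
    (A : Matrix (Fin n) (Fin N) ℝ)
    (U : ∀ j, Matrix (Fin M) (Fin (m j)) ℝ)
    (hU : ∀ j, (U j)ᵀ * U j = 1)
    (c : ∀ j, Fin (m j) → ℝ)
    (S : Finset (Fin N)) (hS : ∀ j, j ∈ S ↔ c j ≠ 0)
    (AS : Matrix (Fin n) {j // j ∈ S} ℝ) (hAS : AS = Matrix.of fun i j => A i j.1)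
    (hinj : ∀ u : Fin N → ℝ, (∀ j ∉ S, u j = 0) → A.mulVec u = 0 → u = 0)
    (G : Matrix {j // j ∈ S} (Fin n) ℝ)
    (hG1 : AS * G * AS = AS)
    (hcert : ∀ j ∉ S, norm2 (fun i : Fin M =>
      ∑ l : {j // j ∈ S},
        ((U l.1).mulVec (c l.1) i / norm2 ((U l.1).mulVec (c l.1))) *
          G.mulVec (fun p => A p j) l) < 1) :
    ∀ c' : (∀ j, Fin (m j) → ℝ),
      A * Ucmat U c' = A * Ucmat U c → c' ≠ c → l21 c < l21 c' := by
  intro c' hAc hne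
  subst hAS
  set X := Ucmat U c
  set D := Ucmat U c' - X
  have hX : ∀ j, X j = 0 ↔ j ∉ S := fun j => by
    rw [hS, not_not]
    exact (mulVec_injective_of_transpose_mul_self (hU j)).eq_iff' (mulVec_zero _)
  have hAD : A * D = 0 := by rw [Matrix.mul_sub, hAc, sub_self]
  have hD : ∃ j, X j = 0 ∧ D j ≠ 0 := by
    by_contra! hDS
    refine hne (funext fun j => mulVec_injective_of_transpose_mul_self (hU j) ?_)
    have hD0 := eq_zero_of_mul_eq_zero_of_supported hinj (fun j hj => hDS j ((hX j).2 hj)) hAD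
    exact congrFun (sub_eq_zero.1 hD0) j
  have hGA : G * colSubmatrix A S = 1 := mul_colSubmatrix_eq_one hinj hG1
  rw [l21_eq_sum_norm2_Ucmat hU, l21_eq_sum_norm2_Ucmat hU c', ← add_sub_cancel X (Ucmat U c')]
  refine sum_norm2_lt_sum_norm2_add_of_dual_certificate A X D (Gᵀ * of fun l : S => sgn (X l)) hAD
    (fun j hj => ?_) (fun j hj => ?_) hD
  · exact transpose_mul_transpose_mul_apply_val hGA _ ⟨j, by simpa [hX] using hj⟩
  · rw [transpose_mul_transpose_mul_apply]
    exact hcert j ((hX j).1 hj)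

/-- Sufficient condition for unique (P1) recovery via the pseudoinverse:
if A_S is injective and ‖sgn(U(c)_S)ᵀ A_S† a_j‖₂ < 1 for all j ∉ S,
then c is the unique solution of (P1) with Y = A·U(c).  Here the
Moore–Penrose pseudoinverse A_S† is characterized by the four Penrose
equations. -/
theorem stmt9 {n N M : ℕ} {m : Fin N → ℕ}
    (A : Matrix (Fin n) (Fin N) ℝ)
    (U : ∀ j, Matrix (Fin M) (Fin (m j)) ℝ)
    (hU : ∀ j, (U j)ᵀ * U j = 1)
    (c : ∀ j, Fin (m j) → ℝ)
    (S : Finset (Fin N)) (hS : ∀ j, j ∈ S ↔ c j ≠ 0)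
    (AS : Matrix (Fin n) {j // j ∈ S} ℝ) (hAS : AS = Matrix.of fun i j => A i j.1)
    (hinj : ∀ u : Fin N → ℝ, (∀ j ∉ S, u j = 0) → A.mulVec u = 0 → u = 0)
    (G : Matrix {j // j ∈ S} (Fin n) ℝ)
    (hG1 : AS * G * AS = AS) (hG2 : G * AS * G = G)
    (hG3 : (AS * G)ᵀ = AS * G) (hG4 : (G * AS)ᵀ = G * AS)
    (hcert : ∀ j ∉ S, norm2 (fun i : Fin M =>
      ∑ l : {j // j ∈ S},
        ((U l.1).mulVec (c l.1) i / norm2 ((U l.1).mulVec (c l.1))) *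
          G.mulVec (fun p => A p j) l) < 1) :
    ∀ c' : (∀ j, Fin (m j) → ℝ),
      A * Ucmat U c' = A * Ucmat U c → c' ≠ c → l21 c < l21 c' :=
  stmt9_general A U hU c S hS AS hAS hinj G hG1 hcert
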